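/- arXiv:1607.07797 — 7 statements merged into one kernel-verified Lean document; each statement's English description precedes it below -/
import Mathlib

section
/- Let A, b, ε, V, d, v be real numbers with b > 0, A ≥ 0, ε ≥ 0, V ≥ 0 and v ≥ 0. Then the safe-driving condition d > (A/b + 1)·((A/2)·ε² + ε·v) + v²/(2b) + V·(ε + (v + A·ε)/b) holds if and only if v < √(b·(A + b)·ε² + V² + 2·b·d) − ε·(A + b) − V (where the square root of a negative real is taken to be 0). -/
/-- The DWA safe-driving condition is equivalent to the velocity bound
`v < √(b·(A+b)·ε² + V² + 2·b·d) − ε·(A+b) − V`. -/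
theorem dwa_safe_iff_velocity_bound
    (A b ε V d v : ℝ) (hb : 0 < b) (hA : 0 ≤ A) (hε : 0 ≤ ε) (hV : 0 ≤ V)
    (hv : 0 ≤ v) :
    d > (A / b + 1) * ((A / 2) * ε ^ 2 + ε * v) + v ^ 2 / (2 * b)
        + V * (ε + (v + A * ε) / b) ↔
      v < Real.sqrt (b * (A + b) * ε ^ 2 + V ^ 2 + 2 * b * d)
            - ε * (A + b) - V := by
  have hx : 0 ≤ v + ε * (A + b) + V := by positivity
  have h1 : (v < Real.sqrt (b * (A + b) * ε ^ 2 + V ^ 2 + 2 * b * d)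
            - ε * (A + b) - V) ↔
      v + ε * (A + b) + V < Real.sqrt (b * (A + b) * ε ^ 2 + V ^ 2 + 2 * b * d) := by
    constructor <;> intro h <;> linarith
  rw [h1, Real.lt_sqrt hx]
  have hb' : b ≠ 0 := ne_of_gt hb
  have key : (A / b + 1) * ((A / 2) * ε ^ 2 + ε * v) + v ^ 2 / (2 * b)
        + V * (ε + (v + A * ε) / b)
      = ((v + ε * (A + b) + V) ^ 2 - (b * (A + b) * ε ^ 2 + V ^ 2)) / (2 * b) := by
    field_simp
    ring
  rw [key, gt_iff_lt, div_lt_iff₀ (by positivity)]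
  constructor <;> intro h <;> nlinarith
end

section
/- Let A, b, ε, V, v, d be real numbers with b > 0, A ≥ 0, ε ≥ 0, V ≥ 0, v ≥ 0, and set T = ε + (v + A·ε)/b. Let x : ℝ → ℝ satisfy x(0) = 0, with derivative x′(t) = v + A·t for all t ∈ [0, ε] and x′(t) = v + A·ε − b·(t − ε) for all t ∈ [ε, T]. Let o : ℝ → ℝ satisfy o(0) = d and be differentiable on [0, T] with |o′(t)| ≤ V for all t ∈ [0, T]. If d > (A/b + 1)·((A/2)·ε² + ε·v) + v²/(2b) + V·(ε + (v + A·ε)/b), then x(t) < o(t) for all t ∈ [0, T]. -/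
/-
While the robot accelerates and then brakes, its velocity stays non-negative until it stops at
time `T`, so its position never exceeds the stopping position
`x T = v ε + A ε² / 2 + (v + A ε)² / (2 b)`, which is the first part of the safe-driving bound.
Meanwhile the obstacle, being `V`-Lipschitz, comes at most `V T` closer than `d`.
-/

open Set

lemma monotoneOn_Icc_of_hasDerivAt_nonneg {f f' : ℝ → ℝ} {a b : ℝ}
    (hf : ∀ t ∈ Icc a b, HasDerivAt f (f' t) t) (hf' : ∀ t ∈ Icc a b, 0 ≤ f' t) :
    MonotoneOn f (Icc a b) :=
  monotoneOn_of_hasDerivWithinAt_nonneg (convex_Icc a b)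
    (fun t ht ↦ (hf t ht).continuousAt.continuousWithinAt)
    (fun t ht ↦ (hf t (interior_subset ht)).hasDerivWithinAt)
    (fun t ht ↦ hf' t (interior_subset ht))

lemma sub_eq_sub_of_hasDerivAt_eq {f g f' : ℝ → ℝ} {a b : ℝ} (hab : a ≤ b)
    (hf : ∀ t ∈ Icc a b, HasDerivAt f (f' t) t) (hg : ∀ t ∈ Icc a b, HasDerivAt g (f' t) t) :
    f b - f a = g b - g a := by
  have hconst := constant_of_has_deriv_right_zero (f := f - g)
    (fun t ht ↦ ((hf t ht).sub (hg t ht)).continuousAt.continuousWithinAt)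
    (fun t ht ↦ by
      have ht' := Ico_subset_Icc_self ht
      simpa using ((hf t ht').sub (hg t ht')).hasDerivWithinAt)
    b (right_mem_Icc.mpr hab)
  simp only [Pi.sub_apply] at hconst
  linarith

lemma sub_mul_le_of_abs_hasDerivAt_le {f f' : ℝ → ℝ} {a b C t : ℝ}
    (hf : ∀ s ∈ Icc a b, HasDerivAt f (f' s) s) (hC : ∀ s ∈ Icc a b, |f' s| ≤ C)
    (ht : t ∈ Icc a b) :
    f a - C * (t - a) ≤ f t := by
  have hlip := (convex_Icc a b).norm_image_sub_le_of_norm_hasDerivWithin_le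
    (fun s hs ↦ (hf s hs).hasDerivWithinAt) hC (left_mem_Icc.mpr (ht.1.trans ht.2)) ht
  rw [Real.norm_eq_abs, Real.norm_eq_abs, abs_of_nonneg (sub_nonneg.mpr ht.1)] at hlip
  linarith [neg_abs_le (f t - f a)]

lemma hasDerivAt_uniformlyAccelerated (u a s₀ t : ℝ) :
    HasDerivAt (fun s ↦ u * (s - s₀) + a / 2 * (s - s₀) ^ 2) (u + a * (t - s₀)) t := by
  have hlin : HasDerivAt (fun s ↦ s - s₀) 1 t := (hasDerivAt_id t).sub_const s₀
  exact ((hlin.const_mul u).add ((hlin.pow 2).const_mul (a / 2))).congr_deriv (by ring)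

lemma eq_of_hasDerivAt_uniformlyAccelerated {x : ℝ → ℝ} {u a s₀ s₁ : ℝ} (h : s₀ ≤ s₁)
    (hx : ∀ t ∈ Icc s₀ s₁, HasDerivAt x (u + a * (t - s₀)) t) :
    x s₁ = x s₀ + u * (s₁ - s₀) + a / 2 * (s₁ - s₀) ^ 2 := by
  have := sub_eq_sub_of_hasDerivAt_eq h hx
    (fun t _ ↦ hasDerivAt_uniformlyAccelerated u a s₀ t)
  simp only [sub_self] at this
  linarith

lemma brakingVelocity_nonneg {u b ε t : ℝ} (hb : 0 < b) (ht : t ≤ ε + u / b) :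
    0 ≤ u - b * (t - ε) := by
  have := (le_div_iff₀' hb).mp (by linarith : t - ε ≤ u / b)
  linarith

/-- Passive safety of one DWA cycle: a robot accelerating at `A` for time `ε`
and then braking at rate `b` never reaches an obstacle starting at distance `d`
and moving with speed at most `V`, provided the safe-driving condition holds. -/
theorem dwa_cycle_passive_safety
    (A b ε V v d : ℝ) (hb : 0 < b) (hA : 0 ≤ A) (hε : 0 ≤ ε) (hV : 0 ≤ V)
    (hv : 0 ≤ v)
    (T : ℝ) (hT : T = ε + (v + A * ε) / b)
    (x : ℝ → ℝ) (hx0 : x 0 = 0)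
    (hx1 : ∀ t ∈ Set.Icc (0 : ℝ) ε, HasDerivAt x (v + A * t) t)
    (hx2 : ∀ t ∈ Set.Icc ε T, HasDerivAt x (v + A * ε - b * (t - ε)) t)
    (o : ℝ → ℝ) (o' : ℝ → ℝ) (ho0 : o 0 = d)
    (ho : ∀ t ∈ Set.Icc (0 : ℝ) T, HasDerivAt o (o' t) t)
    (ho' : ∀ t ∈ Set.Icc (0 : ℝ) T, |o' t| ≤ V)
    (hsafe : d > (A / b + 1) * ((A / 2) * ε ^ 2 + ε * v) + v ^ 2 / (2 * b)
        + V * (ε + (v + A * ε) / b)) :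
    ∀ t ∈ Set.Icc (0 : ℝ) T, x t < o t := by
  have hTε : T - ε = (v + A * ε) / b := by rw [hT]; ring
  have hεT : ε ≤ T := by rw [← sub_nonneg, hTε]; positivity
  have hmono : MonotoneOn x (Icc 0 T) := by
    rw [← Icc_union_Icc_eq_Icc hε hεT]
    refine MonotoneOn.union_right ?_ ?_ (isGreatest_Icc hε) (isLeast_Icc hεT)
    · exact monotoneOn_Icc_of_hasDerivAt_nonneg hx1 fun t ht ↦ by nlinarith [ht.1]
    · exact monotoneOn_Icc_of_hasDerivAt_nonneg hx2
        fun t ht ↦ brakingVelocity_nonneg hb (hT ▸ ht.2)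
  have hxε : x ε = v * ε + A / 2 * ε ^ 2 := by
    have := eq_of_hasDerivAt_uniformlyAccelerated hε (u := v) (a := A)
      fun t ht ↦ by simpa using hx1 t ht
    simpa [hx0] using this
  have hxT : x T = x ε + (v + A * ε) * (T - ε) + -b / 2 * (T - ε) ^ 2 :=
    eq_of_hasDerivAt_uniformlyAccelerated hεT fun t ht ↦ (hx2 t ht).congr_deriv (by ring)
  have hstop : x T = (A / b + 1) * ((A / 2) * ε ^ 2 + ε * v) + v ^ 2 / (2 * b) := by
    rw [hxT, hxε, hTε]
    field_simp
    ring
  intro t ht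
  have hxt : x t ≤ x T := hmono ht (right_mem_Icc.mpr (hε.trans hεT)) ht.2
  have hot : d - V * t ≤ o t := by
    simpa [ho0] using sub_mul_le_of_abs_hasDerivAt_le ho ho' ht
  have hVt : V * t ≤ V * T := mul_le_mul_of_nonneg_left ht.2 hV
  rw [hT] at hVt
  linarith
end

section
/- Let b > 0, V ≥ 0, v ≥ 0 be real numbers, and let p, o : ℝ → ℝ × ℝ be functions that are differentiable on [0, v/b] (where ℝ × ℝ carries the supremum norm), with ‖p′(t)‖ ≤ v − b·t and ‖o′(t)‖ ≤ V for all t ∈ [0, v/b]. If ‖p(0) − o(0)‖ > v²/(2b) + V·v/b, then p(t) ≠ o(t) for all t ∈ [0, v/b]. -/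
/-!
Both trajectories are controlled by the mean value inequality: the obstacle moves at most `V t`
by time `t`, and the robot at most `v t - b t² / 2`, which never exceeds the braking distance
`v² / (2b)` since the difference is `(v - b t)² / (2b)`. For `t ≤ v / b` the two displacements
together stay below the initial separation, so the positions cannot meet.
-/

open Set

theorem norm_image_sub_le_of_norm_deriv_le_deriv_segment {E : Type*} [NormedAddCommGroup E]
    [NormedSpace ℝ E] {f f' : ℝ → E} {g g' : ℝ → ℝ} {a c : ℝ}
    (hf : ∀ x ∈ Icc a c, HasDerivWithinAt f (f' x) (Icc a c) x)
    (hg : ∀ x, HasDerivAt g (g' x) x) (bound : ∀ x ∈ Ico a c, ‖f' x‖ ≤ g' x) :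
    ∀ x ∈ Icc a c, ‖f x - f a‖ ≤ g x - g a := by
  have hf_right : ∀ x ∈ Ico a c, HasDerivWithinAt (fun y => f y - f a) (f' x) (Ici x) x :=
    fun x hx => ((hf x (Ico_subset_Icc_self hx)).sub_const (f a)).mono_of_mem_nhdsWithin
      (Icc_mem_nhdsGE_of_mem hx)
  exact image_norm_le_of_norm_deriv_right_le_deriv_boundary
    (fun x hx => ((hf x hx).sub_const (f a)).continuousWithinAt) hf_right
    (by simp) (fun x => (hg x).sub_const (g a)) bound

theorem hasDerivAt_braking_distance (v b t : ℝ) :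
    HasDerivAt (fun s => v * s - b * s ^ 2 / 2) (v - b * t) t := by
  have h := ((hasDerivAt_id t).const_mul v).sub (((hasDerivAt_pow 2 t).const_mul b).div_const 2)
  refine h.congr_deriv ?_
  simp only [mul_one, Nat.cast_ofNat, Nat.add_one_sub_one, pow_one]
  ring

theorem braking_distance_le {b : ℝ} (hb : 0 < b) (v t : ℝ) :
    v * t - b * t ^ 2 / 2 ≤ v ^ 2 / (2 * b) := by
  rw [le_div_iff₀ (by positivity)]
  nlinarith [sq_nonneg (v - b * t)]

theorem braking_passive_safety_general
    (b V v : ℝ) (hb : 0 < b) (hV : 0 ≤ V)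
    (p o : ℝ → ℝ × ℝ) (p' o' : ℝ → ℝ × ℝ)
    (hp : ∀ t ∈ Set.Icc (0 : ℝ) (v / b),
      HasDerivWithinAt p (p' t) (Set.Icc (0 : ℝ) (v / b)) t)
    (ho : ∀ t ∈ Set.Icc (0 : ℝ) (v / b),
      HasDerivWithinAt o (o' t) (Set.Icc (0 : ℝ) (v / b)) t)
    (hp' : ∀ t ∈ Set.Icc (0 : ℝ) (v / b), ‖p' t‖ ≤ v - b * t)
    (ho' : ∀ t ∈ Set.Icc (0 : ℝ) (v / b), ‖o' t‖ ≤ V)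
    (hinit : ‖p 0 - o 0‖ > v ^ 2 / (2 * b) + V * v / b) :
    ∀ t ∈ Set.Icc (0 : ℝ) (v / b), p t ≠ o t := by
  intro t ht hcollide
  have hrobot : ‖p t - p 0‖ ≤ v * t - b * t ^ 2 / 2 := by
    simpa using norm_image_sub_le_of_norm_deriv_le_deriv_segment hp
      (hasDerivAt_braking_distance v b) (fun x hx => hp' x (Ico_subset_Icc_self hx)) t ht
  have hobstacle : ‖o t - o 0‖ ≤ V * t := by
    simpa using norm_image_sub_le_of_norm_deriv_le_segment' ho
      (fun x hx => ho' x (Ico_subset_Icc_self hx)) t ht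
  have hobstacle_le : V * t ≤ V * v / b := by
    rw [mul_div_assoc]
    exact mul_le_mul_of_nonneg_left ht.2 hV
  have hsep : ‖p 0 - o 0‖ ≤ ‖p t - p 0‖ + ‖o t - o 0‖ := by
    calc ‖p 0 - o 0‖ = ‖(o t - o 0) - (p t - p 0)‖ := by rw [hcollide]; abel_nf
      _ ≤ ‖o t - o 0‖ + ‖p t - p 0‖ := norm_sub_le _ _
      _ = ‖p t - p 0‖ + ‖o t - o 0‖ := add_comm _ _
  linarith [braking_distance_le hb v t]

/-- A braking robot (speed at most `v − b·t`, stopping at time `v/b`) cannot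
collide with an obstacle moving at speed at most `V` if the passive-safety
margin `‖p(0) − o(0)‖ > v²/(2b) + V·v/b` holds initially (sup norm on ℝ²). -/
theorem braking_passive_safety
    (b V v : ℝ) (hb : 0 < b) (hV : 0 ≤ V) (hv : 0 ≤ v)
    (p o : ℝ → ℝ × ℝ) (p' o' : ℝ → ℝ × ℝ)
    (hp : ∀ t ∈ Set.Icc (0 : ℝ) (v / b),
      HasDerivWithinAt p (p' t) (Set.Icc (0 : ℝ) (v / b)) t)
    (ho : ∀ t ∈ Set.Icc (0 : ℝ) (v / b),
      HasDerivWithinAt o (o' t) (Set.Icc (0 : ℝ) (v / b)) t)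
    (hp' : ∀ t ∈ Set.Icc (0 : ℝ) (v / b), ‖p' t‖ ≤ v - b * t)
    (ho' : ∀ t ∈ Set.Icc (0 : ℝ) (v / b), ‖o' t‖ ≤ V)
    (hinit : ‖p 0 - o 0‖ > v ^ 2 / (2 * b) + V * v / b) :
    ∀ t ∈ Set.Icc (0 : ℝ) (v / b), p t ≠ o t :=
  braking_passive_safety_general b V v hb hV p o p' o' hp ho hp' ho' hinit
end

section
/- Let A, v, ε, V, d, b be real numbers with b > 0. If d > (A/b + 1)·((A/2)·ε² + ε·v) + v²/(2b) + V·(ε + (v + A·ε)/b), then d − ((A/2)·ε² + ε·v) − V·ε > (v + A·ε)²/(2b) + V·(v + A·ε)/b. -/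
/-- The safe-driving condition before an acceleration cycle implies the
passive-safety invariant after the cycle. -/
theorem dwa_safe_implies_invariant_after_cycle
    (A v ε V d b : ℝ) (hb : 0 < b)
    (hsafe : d > (A / b + 1) * ((A / 2) * ε ^ 2 + ε * v) + v ^ 2 / (2 * b)
        + V * (ε + (v + A * ε) / b)) :
    d - ((A / 2) * ε ^ 2 + ε * v) - V * ε
      > (v + A * ε) ^ 2 / (2 * b) + V * (v + A * ε) / b := by
  have hb' : b ≠ 0 := ne_of_gt hb
  have : (v + A * ε) ^ 2 / (2 * b) + V * (v + A * ε) / b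
      = (A / b + 1) * ((A / 2) * ε ^ 2 + ε * v) + v ^ 2 / (2 * b)
        + V * (ε + (v + A * ε) / b) - ((A / 2) * ε ^ 2 + ε * v) - V * ε := by
    field_simp
    ring
  linarith [this, hsafe]
end

section
/- Let Σ be a type and let M₁, M₂, A, P be sets of lists over Σ. Suppose (1) for every set E of lists over Σ, if E ∩ M₁ ⊆ A then E ∩ M₁ ⊆ P, and (2) for every set E of lists over Σ, E ∩ M₂ ⊆ A. Then for every set E of lists over Σ, E ∩ (M₁ ∩ M₂) ⊆ P. -/
/-- Soundness of the asymmetric assume-guarantee proof rule. -/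
theorem assume_guarantee_sound
    {σ : Type*} (M₁ M₂ A P : Set (List σ))
    (h1 : ∀ E : Set (List σ), E ∩ M₁ ⊆ A → E ∩ M₁ ⊆ P)
    (h2 : ∀ E : Set (List σ), E ∩ M₂ ⊆ A) :
    ∀ E : Set (List σ), E ∩ (M₁ ∩ M₂) ⊆ P := by
  intro E x hx
  have := h1 (E ∩ M₂) (by
    intro y hy
    exact h2 E hy.1)
  exact this ⟨⟨hx.1, hx.2.2⟩, hx.2.1⟩
end

section
/- Let m, c, l, x₀, y₀ be real numbers with |m| ≤ 1 and l ≥ 0. If y₀ ≤ m·x₀ + c − (l/2)·(1 + |m|), then for all real x, y with |x − x₀| ≤ l/2 and |y − y₀| ≤ l/2, one has y ≤ m·x + c. -/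
/-- If the center of a square robot of side `l` is below the line
`y = m·x + c` with margin `(l/2)·(1 + |m|)`, then the whole body of the robot
lies below the line. -/
theorem square_below_line_of_center_margin
    (m c l x₀ y₀ : ℝ) (hm : |m| ≤ 1) (hl : 0 ≤ l)
    (hc : y₀ ≤ m * x₀ + c - (l / 2) * (1 + |m|)) :
    ∀ x y : ℝ, |x - x₀| ≤ l / 2 → |y - y₀| ≤ l / 2 → y ≤ m * x + c := by
  intro x y hx hy
  have h1 : y - y₀ ≤ l / 2 := (abs_le.mp hy).2
  have h2 : m * (x₀ - x) ≤ |m| * (l / 2) := by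
    calc m * (x₀ - x) ≤ |m * (x₀ - x)| := le_abs_self _
      _ = |m| * |x₀ - x| := abs_mul _ _
      _ ≤ |m| * (l / 2) := by
          have := (abs_sub_comm x x₀) ▸ hx
          exact mul_le_mul_of_nonneg_left this (abs_nonneg m)
  nlinarith [abs_nonneg m]
end

section
/- Let m, c, l be real numbers with |m| ≤ 1 and l ≥ 0, and let (x₀, y₀) and (x₁, y₁) be two points each satisfying yᵢ ≤ m·xᵢ + c − (l/2)·(1 + |m|) for i = 0, 1. Then for every t ∈ [0, 1], writing x_t = (1 − t)·x₀ + t·x₁ and y_t = (1 − t)·y₀ + t·y₁, every point (x, y) with |x − x_t| ≤ l/2 and |y − y_t| ≤ l/2 satisfies y ≤ m·x + c. -/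
/-- If both endpoints of a straight-line trajectory satisfy the below-region
margin constraint for a line of slope `|m| ≤ 1`, then the whole square robot
body stays below the line along the entire trajectory. -/
theorem square_below_line_along_segment
    (m c l x₀ y₀ x₁ y₁ : ℝ) (hm : |m| ≤ 1) (hl : 0 ≤ l)
    (h0 : y₀ ≤ m * x₀ + c - (l / 2) * (1 + |m|))
    (h1 : y₁ ≤ m * x₁ + c - (l / 2) * (1 + |m|)) :
    ∀ t ∈ Set.Icc (0 : ℝ) 1, ∀ x y : ℝ,
      |x - ((1 - t) * x₀ + t * x₁)| ≤ l / 2 →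
      |y - ((1 - t) * y₀ + t * y₁)| ≤ l / 2 →
      y ≤ m * x + c := by
  rintro t ⟨ht0, ht1⟩ x y hx hy
  set xt := (1 - t) * x₀ + t * x₁ with hxt
  set yt := (1 - t) * y₀ + t * y₁ with hyt
  have hmid : yt ≤ m * xt + c - (l / 2) * (1 + |m|) := by
    have := mul_le_mul_of_nonneg_left h0 (by linarith : (0:ℝ) ≤ 1 - t)
    have := mul_le_mul_of_nonneg_left h1 ht0
    rw [hxt, hyt]; nlinarith
  have h1' : y - yt ≤ l / 2 := (abs_le.1 hy).2
  have h2' : |m * x - m * xt| ≤ |m| * (l / 2) := by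
    rw [← mul_sub, abs_mul]
    exact mul_le_mul_of_nonneg_left hx (abs_nonneg m)
  have h3 : m * xt - m * x ≤ |m| * (l / 2) := by
    have := (abs_le.1 h2').1; linarith
  nlinarith
end
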